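/- (Composition for CL) If φ is CL-valid and φ → ψ is CL-valid, then ψ is CL-valid; i.e., the set of CL-valid formulas is closed under modus ponens. -/

import Mathlib

/- Formalization of Lorenzen dialogue games, following Felscher's presentation.

   Propositional formulas are built from atoms using ¬, ∧, ∨, →.  A dialogue
   for a formula φ is a sequence of moves beginning with Proponent (P)
   asserting φ at position 0, with O moving at odd positions and P at even
   positions.  Each later move attacks or defends an earlier move of the other
   player, according to the particle rules.  Structural rules (D10, D11, D12,
   D13, E, and the variants D10*, D10′) constrain dialogues further.  P wins
   if P made the last move and no moves are available to O; φ is S-valid if P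
   has an S-winning strategy for φ. -/

namespace LorenzenDialogues

/-- Propositional formulas: atoms, ¬, ∧, ∨, →. -/
inductive Formula : Type
  | atom : ℕ → Formula
  | neg  : Formula → Formula
  | and  : Formula → Formula → Formula
  | or   : Formula → Formula → Formula
  | imp  : Formula → Formula → Formula
deriving DecidableEq

/-- Statements: formulas together with the symbolic attacks `?`, `∧_L`, `∧_R`. -/
inductive Statement : Type
  | form  : Formula → Statement
  | qmark : Statement
  | andL  : Statement
  | andR  : Statement
deriving DecidableEq

/-- Particle rules, attack part: which statements attack which formulas. -/
inductive Attacks : Statement → Formula → Prop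
  | andL (a b : Formula) : Attacks .andL (.and a b)
  | andR (a b : Formula) : Attacks .andR (.and a b)
  | qmark (a b : Formula) : Attacks .qmark (.or a b)
  | imp (a b : Formula) : Attacks (.form a) (.imp a b)
  | neg (a : Formula) : Attacks (.form a) (.neg a)

/-- Particle rules, defense part: `Defends χ a s` means `s` is a permitted
    defense of the formula `χ` against the attack `a`.  (A negation admits
    no defense.) -/
inductive Defends : Formula → Statement → Statement → Prop
  | andL (a b : Formula) : Defends (.and a b) .andL (.form a)
  | andR (a b : Formula) : Defends (.and a b) .andR (.form b)
  | orL (a b : Formula) : Defends (.or a b) .qmark (.form a)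
  | orR (a b : Formula) : Defends (.or a b) .qmark (.form b)
  | imp (a b : Formula) : Defends (.imp a b) (.form a) (.form b)

/-- A move: a statement, a flag recording whether it is an attack (`true`)
    or a defense (`false`), and the position of the earlier move it attacks,
    resp. the earlier attack it defends against. -/
structure Move : Type where
  statement : Statement
  isAttack : Bool
  ref : ℕ
deriving DecidableEq

/-- A dialogue: the initial formula asserted by P at position 0, followed by
    the list of later moves (the move at list index `i` occupies position
    `i + 1`; O moves at odd positions, P at even positions). -/
structure Dialogue : Type where
  initial : Formula
  moves : List Move

/-- The statement asserted at position `n` (if any). -/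
def Dialogue.stmtAt (d : Dialogue) (n : ℕ) : Option Statement :=
  if n = 0 then some (.form d.initial) else (d.moves[n - 1]?).map Move.statement

/-- The move at position `n ≥ 1` (if any); position 0 is the initial assertion,
    not a move. -/
def Dialogue.moveAt (d : Dialogue) (n : ℕ) : Option Move :=
  if n = 0 then none else d.moves[n - 1]?

/-- The move `m`, played at position `n ≥ 1`, is permitted by the particle
    rules: it refers to an earlier position of the other player; if it is an
    attack, it attacks a formula asserted there, and if it is a defense, it
    responds to an attack played there, as the particle rules prescribe. -/
def MoveOK (d : Dialogue) (n : ℕ) (m : Move) : Prop :=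
  m.ref < n ∧ m.ref % 2 ≠ n % 2 ∧
    (m.isAttack = true →
      ∃ ψ, d.stmtAt m.ref = some (.form ψ) ∧ Attacks m.statement ψ) ∧
    (m.isAttack = false →
      ∃ a χ, d.moveAt m.ref = some a ∧ a.isAttack = true ∧
        d.stmtAt a.ref = some (.form χ) ∧ Defends χ a.statement m.statement)

/-- The dialogue adheres to the particle rules (every move is legal). -/
def ParticleOK (d : Dialogue) : Prop :=
  ∀ i m, d.moves[i]? = some m → MoveOK d (i + 1) m

/-- Position `n` carries a defense of the attack made at position `r`. -/
def IsDefenseOf (d : Dialogue) (n r : ℕ) : Prop :=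
  ∃ m, d.moveAt n = some m ∧ m.isAttack = false ∧ m.ref = r

/-- Position `n` carries an attack on the assertion made at position `r`. -/
def IsAttackOn (d : Dialogue) (n r : ℕ) : Prop :=
  ∃ m, d.moveAt n = some m ∧ m.isAttack = true ∧ m.ref = r

/-- Position `n` carries an attack. -/
def IsAttackPos (d : Dialogue) (n : ℕ) : Prop :=
  ∃ m, d.moveAt n = some m ∧ m.isAttack = true

/-- The attack at position `r` is still open (no defense against it has yet
    been played) before position `k`. -/
def OpenAt (d : Dialogue) (r k : ℕ) : Prop :=
  IsAttackPos d r ∧ ¬ ∃ j, j < k ∧ IsDefenseOf d j r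

/-- (D10) P may assert an atomic formula only after it has been asserted by O
    before. -/
def D10 (d : Dialogue) : Prop :=
  ∀ n p, n % 2 = 0 → d.stmtAt n = some (.form (.atom p)) →
    ∃ j, j < n ∧ j % 2 = 1 ∧ d.stmtAt j = some (.form (.atom p))

/-- (D10*) P may assert an atom `p` only if O has asserted `p` or `¬p`
    before. -/
def D10star (d : Dialogue) : Prop :=
  ∀ n p, n % 2 = 0 → d.stmtAt n = some (.form (.atom p)) →
    ∃ j, j < n ∧ j % 2 = 1 ∧
      (d.stmtAt j = some (.form (.atom p)) ∨
        d.stmtAt j = some (.form (.neg (.atom p))))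

/-- (D10′) P may assert an atom `p` only if O has asserted `p` or `¬¬p`
    before. -/
def D10prime (d : Dialogue) : Prop :=
  ∀ n p, n % 2 = 0 → d.stmtAt n = some (.form (.atom p)) →
    ∃ j, j < n ∧ j % 2 = 1 ∧
      (d.stmtAt j = some (.form (.atom p)) ∨
        d.stmtAt j = some (.form (.neg (.neg (.atom p)))))

/-- (D11) When defending, only the most recent open attack may be responded
    to: the attack defended against is open, and no strictly more recent open
    attack (against the same player) exists. -/
def D11 (d : Dialogue) : Prop :=
  ∀ n r, IsDefenseOf d n r →
    OpenAt d r n ∧ ¬ ∃ r', r < r' ∧ r' < n ∧ r' % 2 = r % 2 ∧ OpenAt d r' n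

/-- (D12) An attack may be answered at most once. -/
def D12 (d : Dialogue) : Prop :=
  ∀ n₁ n₂ r, IsDefenseOf d n₁ r → IsDefenseOf d n₂ r → n₁ = n₂

/-- (D13) A P-assertion (made at an even position) may be attacked at most
    once. -/
def D13 (d : Dialogue) : Prop :=
  ∀ n₁ n₂ r, r % 2 = 0 → IsAttackOn d n₁ r → IsAttackOn d n₂ r → n₁ = n₂

/-- (E) O can react only upon the immediately preceding P-statement. -/
def ERule (d : Dialogue) : Prop :=
  ∀ n m, n % 2 = 1 → d.moveAt n = some m → m.ref = n - 1

/-- A ruleset is a set of structural rules, i.e. a predicate on dialogues. -/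
def Ruleset := Dialogue → Prop

/-- Ruleset D = {D10, D11, D12, D13}. -/
def rulesetD : Ruleset := fun d => D10 d ∧ D11 d ∧ D12 d ∧ D13 d

/-- Ruleset E = D ∪ {E}. -/
def rulesetE : Ruleset := fun d => rulesetD d ∧ ERule d

/-- Ruleset CL = E − {D11, D12} = {D10, D13, E}. -/
def rulesetCL : Ruleset := fun d => D10 d ∧ D13 d ∧ ERule d

/-- Ruleset N = D − {D11, D12} = {D10, D13}. -/
def rulesetN : Ruleset := fun d => D10 d ∧ D13 d

/-- Ruleset E* = {D10*, D11, D12, D13, E}. -/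
def rulesetEstar : Ruleset :=
  fun d => D10star d ∧ D11 d ∧ D12 d ∧ D13 d ∧ ERule d

/-- Ruleset E′ = {D10′, D11, D12, D13, E}. -/
def rulesetEprime : Ruleset :=
  fun d => D10prime d ∧ D11 d ∧ D12 d ∧ D13 d ∧ ERule d

/-- An S-dialogue: a dialogue adhering to the particle rules and to the
    structural rules S. -/
def Legal (S : Ruleset) (d : Dialogue) : Prop := ParticleOK d ∧ S d

/-- Extend a dialogue by one move. -/
def Dialogue.extend (d : Dialogue) (m : Move) : Dialogue :=
  ⟨d.initial, d.moves ++ [m]⟩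

/-- The position about to be played. -/
def nextPos (d : Dialogue) : ℕ := d.moves.length + 1

/-- It is P's turn (the next position is even). -/
def PTurn (d : Dialogue) : Prop := nextPos d % 2 = 0

/-- The move `m` legally extends the S-dialogue `d`. -/
def LegalExt (S : Ruleset) (d : Dialogue) (m : Move) : Prop :=
  Legal S (d.extend m)

/-- `PWinningC S C d` holds when P, moving under the additional constraint
    `C` on P's own choices, has a winning strategy in the S-dialogue game
    continuing the dialogue `d`: at P's turn, P has a legal move (satisfying
    `C`) after which P is still winning; at O's turn, every legal O-move
    leads to a position where P is winning (in particular, if no O-move is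
    available, P has won: P made the last move and O cannot move). -/
inductive PWinningC (S : Ruleset) (C : Dialogue → Move → Prop) : Dialogue → Prop
  | pMove (d : Dialogue) (m : Move) (hturn : PTurn d)
      (hm : LegalExt S d m) (hC : C d m)
      (h : PWinningC S C (d.extend m)) : PWinningC S C d
  | oMoves (d : Dialogue) (hturn : ¬ PTurn d)
      (h : ∀ m, LegalExt S d m → PWinningC S C (d.extend m)) :
      PWinningC S C d

/-- P has a winning strategy continuing the S-dialogue `d`. -/
def PWinning (S : Ruleset) (d : Dialogue) : Prop :=
  PWinningC S (fun _ _ => True) d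

/-- `valid S φ` (written `⊨_S φ`): the opening assertion of φ is itself a
    legal S-dialogue and P has an S-winning strategy for φ. -/
def valid (S : Ruleset) (φ : Formula) : Prop :=
  Legal S ⟨φ, []⟩ ∧ PWinning S ⟨φ, []⟩

/-- Derivability in intuitionistic propositional logic (a Hilbert-style
    axiomatization with modus ponens). -/
inductive IProv : Formula → Prop
  | k (a b : Formula) : IProv (.imp a (.imp b a))
  | s (a b c : Formula) :
      IProv (.imp (.imp a (.imp b c)) (.imp (.imp a b) (.imp a c)))
  | andE1 (a b : Formula) : IProv (.imp (.and a b) a)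
  | andE2 (a b : Formula) : IProv (.imp (.and a b) b)
  | andI (a b : Formula) : IProv (.imp a (.imp b (.and a b)))
  | orI1 (a b : Formula) : IProv (.imp a (.or a b))
  | orI2 (a b : Formula) : IProv (.imp b (.or a b))
  | orE (a b c : Formula) :
      IProv (.imp (.imp a c) (.imp (.imp b c) (.imp (.or a b) c)))
  | negI (a b : Formula) :
      IProv (.imp (.imp a b) (.imp (.imp a (.neg b)) (.neg a)))
  | negE (a b : Formula) : IProv (.imp (.neg a) (.imp a b))
  | mp (a b : Formula) : IProv (.imp a b) → IProv a → IProv b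

/-- The stability principle ¬¬p → p for the atom `p`. -/
def stab (p : ℕ) : Formula := .imp (.neg (.neg (.atom p))) (.atom p)

/-- Stable logic: intuitionistic propositional logic plus all instances of
    the stability scheme ¬¬p → p for atoms p, closed under modus ponens. -/
inductive StableProv : Formula → Prop
  | intuit (a : Formula) : IProv a → StableProv a
  | stab (p : ℕ) : StableProv (stab p)
  | mp (a b : Formula) : StableProv (.imp a b) → StableProv a → StableProv b

/-- Boolean evaluation of a formula under a valuation of its atoms. -/
def Formula.eval (v : ℕ → Bool) : Formula → Bool
  | .atom p => v p
  | .neg a => !(a.eval v)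
  | .and a b => a.eval v && b.eval v
  | .or a b => a.eval v || b.eval v
  | .imp a b => !(a.eval v) || b.eval v

/-- A classical tautology: true under every Boolean valuation. -/
def Tautology (φ : Formula) : Prop := ∀ v, φ.eval v = true

/-- Uniform substitution of formulas for atoms, applied homomorphically. -/
def Formula.subst (σ : ℕ → Formula) : Formula → Formula
  | .atom p => σ p
  | .neg a => .neg (a.subst σ)
  | .and a b => .and (a.subst σ) (b.subst σ)
  | .or a b => .or (a.subst σ) (b.subst σ)
  | .imp a b => .imp (a.subst σ) (b.subst σ)

/-- The atoms occurring in a formula. -/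
def Formula.atoms : Formula → List ℕ
  | .atom p => [p]
  | .neg a => a.atoms
  | .and a b => a.atoms ++ b.atoms
  | .or a b => a.atoms ++ b.atoms
  | .imp a b => a.atoms ++ b.atoms

/-- Conjunction of a nonempty list of formulas. -/
def conjList (f : Formula) : List Formula → Formula
  | [] => f
  | g :: gs => .and f (conjList g gs)

/-- The conjunction (¬¬p → p) ∧ … of stability instances for the atoms
    `p :: ps`. -/
def stabConj (p : ℕ) (ps : List ℕ) : Formula :=
  conjList (stab p) (ps.map stab)

/-! A formula is CL-valid iff it is a classical tautology, and tautologies are closed under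
modus ponens.

If a valuation `v` falsifies `φ`, O keeps `v` as a countermodel: everything O asserts is true
under `v` and every formula with which P could defend is false. O can always move so as to
preserve this, so P never wins.

Conversely, P plays a proof search for the sequent "O's assertions ⊢ P's possible defenses":
he defends with, or attacks, one formula and continues with that formula decomposed. Without
(D11) and (D12) P may answer any earlier attack at any time, so the right-hand side behaves
like a classical multi-conclusion sequent. The search keeps the sequent classically valid and
lowers its weight; when no move is productive, the atoms asserted by O form a falsifying
valuation, which is impossible. -/

def Formula.weight : Formula → ℕ
  | .atom _ => 1
  | .neg a => a.weight + 1
  | .and a b | .or a b | .imp a b => a.weight + b.weight + 1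

def weightSum (L : List Formula) : ℕ := (L.map Formula.weight).sum

@[simp] lemma weightSum_nil : weightSum [] = 0 := rfl

@[simp] lemma weightSum_cons (a : Formula) (L : List Formula) :
    weightSum (a :: L) = a.weight + weightSum L := by
  simp [weightSum]

@[simp] lemma weightSum_append (L M : List Formula) :
    weightSum (L ++ M) = weightSum L + weightSum M := by
  simp [weightSum]

lemma weightSum_erase {x : Formula} {L : List Formula} (h : x ∈ L) :
    weightSum (L.erase x) + x.weight = weightSum L := by
  simpa [weightSum, add_comm] using ((List.perm_cons_erase h).map Formula.weight).sum_eq.symm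

def Statement.assertions : Statement → List Formula
  | .form a => [a]
  | _ => []

@[simp] lemma Statement.mem_assertions {s : Statement} {a : Formula} :
    a ∈ s.assertions ↔ s = .form a := by
  cases s <;> simp [Statement.assertions, eq_comm]

def defenses : Formula → Statement → List Formula
  | .and b _, .andL => [b]
  | .and _ c, .andR => [c]
  | .or b c, .qmark => [b, c]
  | .imp _ c, .form _ => [c]
  | _, _ => []

def Falsifies (v : ℕ → Bool) (Γ Δ : List Formula) : Prop :=
  (∀ a ∈ Γ, a.eval v = true) ∧ ∀ b ∈ Δ, b.eval v = false

lemma falsifies_append {v : ℕ → Bool} {Γ Δ Γ' Δ' : List Formula} :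
    Falsifies v (Γ ++ Γ') (Δ ++ Δ') ↔ Falsifies v Γ Δ ∧ Falsifies v Γ' Δ' := by
  simp only [Falsifies, List.mem_append, or_imp, forall_and]
  tauto

def SeqValid (Γ Δ : List Formula) : Prop := ∀ v, ¬ Falsifies v Γ Δ

lemma Defends.exists_eq_form {χ : Formula} {u s : Statement} (h : Defends χ u s) :
    ∃ c, s = .form c := by
  cases h <;> exact ⟨_, rfl⟩

namespace Attacks

variable {v : ℕ → Bool} {s : Statement} {a : Formula}

lemma defends_of_mem_defenses (hs : Attacks s a) {c : Formula} (hc : c ∈ defenses a s) :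
    Defends a s (.form c) := by
  cases hs <;> simp only [defenses, List.mem_cons, List.not_mem_nil, or_false] at hc <;>
    rcases hc with rfl | rfl <;> constructor

lemma weightSum_lt (hs : Attacks s a) :
    weightSum s.assertions + weightSum (defenses a s) < a.weight := by
  cases hs <;> simp [Statement.assertions, defenses, Formula.weight]

lemma eval_eq_false (hs : Attacks s a) (h : Falsifies v s.assertions (defenses a s)) :
    a.eval v = false := by
  cases hs <;> simp_all [Falsifies, Statement.assertions, defenses, Formula.eval]

lemma exists_defends_or (hs : Attacks s a) (ha : a.eval v = true) :
    (∃ c, Defends a s (.form c) ∧ c.eval v = true) ∨ ∃ b, s = .form b ∧ b.eval v = false := by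
  cases hs with
  | andL b c => exact .inl ⟨b, .andL b c, by simp_all [Formula.eval]⟩
  | andR b c => exact .inl ⟨c, .andR b c, by simp_all [Formula.eval]⟩
  | qmark b c =>
    rcases Bool.or_eq_true_iff.mp ha with h | h
    exacts [.inl ⟨b, .orL b c, h⟩, .inl ⟨c, .orR b c, h⟩]
  | imp b c =>
    cases hc : c.eval v
    · exact .inr ⟨b, rfl, by simpa [Formula.eval, hc] using ha⟩
    · exact .inl ⟨c, .imp b c, hc⟩
  | neg b => exact .inr ⟨b, rfl, by simpa [Formula.eval] using ha⟩

end Attacks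

lemma Formula.exists_attacks_of_eval_eq_false {v : ℕ → Bool} {a : Formula}
    (ha : a.eval v = false) (hna : ∀ p, a ≠ .atom p) :
    ∃ s, Attacks s a ∧ (∀ b, s = .form b → b.eval v = true) ∧
      ∀ c, Defends a s (.form c) → c.eval v = false := by
  cases a with
  | atom p => exact absurd rfl (hna p)
  | and b c =>
    cases hb : b.eval v
    · exact ⟨.andL, .andL b c, by simp, fun _ h => by cases h; exact hb⟩
    · exact ⟨.andR, .andR b c, by simp, fun _ h => by cases h; simpa [Formula.eval, hb] using ha⟩
  | or b c =>
    refine ⟨.qmark, .qmark b c, by simp, fun _ h => ?_⟩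
    simp only [Formula.eval, Bool.or_eq_false_iff] at ha
    cases h
    exacts [ha.1, ha.2]
  | imp b c =>
    simp only [Formula.eval, Bool.or_eq_false_iff, Bool.not_eq_false'] at ha
    exact ⟨.form b, .imp b c, by simp [ha.1], fun _ h => by cases h; exact ha.2⟩
  | neg b =>
    exact ⟨.form b, .neg b, by simpa [Formula.eval] using ha, fun _ h => by cases h⟩

namespace SeqValid

variable {Γ Δ G D : List Formula} {x : Formula}

lemma replace_left (hv : SeqValid Γ Δ)
    (hsem : ∀ v, Falsifies v G D → x.eval v = true) :
    SeqValid (G ++ Γ.erase x) (D ++ Δ) := by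
  intro v hf
  obtain ⟨hGD, hΓ, hΔ⟩ := falsifies_append.mp hf
  refine hv v ⟨fun a ha => ?_, hΔ⟩
  by_cases hax : a = x
  · exact hax ▸ hsem v hGD
  · exact hΓ a ((List.mem_erase_of_ne hax).mpr ha)

lemma replace_right (hv : SeqValid Γ Δ)
    (hsem : ∀ v, Falsifies v G D → x.eval v = false) :
    SeqValid (G ++ Γ) (D ++ Δ.erase x) := by
  intro v hf
  obtain ⟨hGD, hΓ, hΔ⟩ := falsifies_append.mp hf
  refine hv v ⟨hΓ, fun b hb => ?_⟩
  by_cases hbx : b = x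
  · exact hbx ▸ hsem v hGD
  · exact hΔ b ((List.mem_erase_of_ne hbx).mpr hb)

end SeqValid

/-- Given O's assertions `Γ`, P may assert `a` without violating (D10). -/
def Assertable (Γ : List Formula) (a : Formula) : Prop := ∀ p, a = .atom p → a ∈ Γ

/-- P may attack the O-assertion without violating (D10). -/
def Attackable (Γ : List Formula) : Formula → Prop
  | .atom _ => False
  | .and _ _ | .or _ _ => True
  | .imp a _ | .neg a => Assertable Γ a

lemma falsifies_of_stuck {Γ Δ : List Formula} (hΓ : ∀ x ∈ Γ, ¬ Attackable Γ x)
    (hΔ : ∀ x ∈ Δ, ¬ Assertable Γ x) :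
    Falsifies (fun p => decide (.atom p ∈ Γ)) Γ Δ := by
  have hatom : ∀ a, ¬ Assertable Γ a → a.eval (fun p => decide (.atom p ∈ Γ)) = false := by
    intro a ha
    simp only [Assertable, not_forall] at ha
    obtain ⟨p, rfl, hp⟩ := ha
    simpa [Formula.eval] using hp
  refine ⟨fun x hx => ?_, fun x hx => hatom x (hΔ x hx)⟩
  have hna := hΓ x hx
  cases x with
  | atom p => simpa [Formula.eval] using hx
  | and | or => exact absurd trivial hna
  | imp a c => simp [Formula.eval, hatom a hna]
  | neg a => simp [Formula.eval, hatom a hna]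

lemma _root_.List.getElem?_append_singleton {α : Type*} (L : List α) (x : α) (i : ℕ) :
    (L ++ [x])[i]? = if i = L.length then some x else L[i]? := by
  by_cases hi : i = L.length
  · simp [hi]
  · rw [if_neg hi, List.getElem?_append]
    split_ifs
    · rfl
    · rw [List.getElem?_eq_none (by simp; omega), List.getElem?_eq_none (by omega)]

namespace Dialogue

variable {d : Dialogue} {m mv : Move} {k : ℕ} {s : Statement}

@[simp] lemma nextPos_extend : nextPos (d.extend m) = nextPos d + 1 := by
  simp [nextPos, extend]

lemma pTurn_iff : PTurn d ↔ d.moves.length % 2 = 1 := by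
  simp only [PTurn, nextPos]
  omega

@[simp] lemma pTurn_extend : PTurn (d.extend m) ↔ ¬ PTurn d := by
  simp only [PTurn, nextPos_extend]
  omega

lemma moveAt_extend (d : Dialogue) (m : Move) (k : ℕ) :
    (d.extend m).moveAt k = if k = nextPos d then some m else d.moveAt k := by
  simp only [moveAt, extend, nextPos, List.getElem?_append_singleton]
  split_ifs <;> first | rfl | omega

lemma stmtAt_extend (d : Dialogue) (m : Move) (k : ℕ) :
    (d.extend m).stmtAt k = if k = nextPos d then some m.statement else d.stmtAt k := by
  simp only [stmtAt, extend, nextPos, List.getElem?_append_singleton]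
  split_ifs <;> first | rfl | omega

@[simp] lemma moveAt_extend_nextPos : (d.extend m).moveAt (nextPos d) = some m := by
  simp [moveAt_extend]

@[simp] lemma stmtAt_extend_nextPos : (d.extend m).stmtAt (nextPos d) = some m.statement := by
  simp [stmtAt_extend]

lemma moveAt_extend_of_ne (h : k ≠ nextPos d) : (d.extend m).moveAt k = d.moveAt k := by
  simp [moveAt_extend, h]

lemma stmtAt_extend_of_ne (h : k ≠ nextPos d) : (d.extend m).stmtAt k = d.stmtAt k := by
  simp [stmtAt_extend, h]

lemma pos_lt_nextPos_of_moveAt (h : d.moveAt k = some mv) : 0 < k ∧ k < nextPos d := by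
  simp only [moveAt, nextPos] at h ⊢
  split_ifs at h with hk
  have := (List.getElem?_eq_some_iff.mp h).1
  omega

lemma lt_nextPos_of_stmtAt (h : d.stmtAt k = some s) : k < nextPos d := by
  simp only [stmtAt, nextPos] at h ⊢
  split_ifs at h with hk
  · omega
  · obtain ⟨_, hm, -⟩ := Option.map_eq_some_iff.mp h
    have := (List.getElem?_eq_some_iff.mp hm).1
    omega

lemma moveAt_extend_of_eq_some (h : d.moveAt k = some mv) : (d.extend m).moveAt k = some mv := by
  rw [moveAt_extend_of_ne (pos_lt_nextPos_of_moveAt h).2.ne, h]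

lemma stmtAt_extend_of_eq_some (h : d.stmtAt k = some s) : (d.extend m).stmtAt k = some s := by
  rw [stmtAt_extend_of_ne (lt_nextPos_of_stmtAt h).ne, h]

lemma stmtAt_of_moveAt (h : d.moveAt k = some mv) : d.stmtAt k = some mv.statement := by
  have hk := (pos_lt_nextPos_of_moveAt h).1
  simp only [moveAt, stmtAt, hk.ne', if_false] at h ⊢
  simp [h]

lemma exists_moveAt (h0 : 0 < k) (hk : k < nextPos d) : ∃ mv, d.moveAt k = some mv := by
  simp only [moveAt, nextPos, h0.ne', if_false] at hk ⊢
  exact ⟨_, List.getElem?_eq_getElem (by omega)⟩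

lemma length_moves_extend : (d.extend m).moves.length = nextPos d := by
  simp [extend, nextPos]

def OAsserts (d : Dialogue) (a : Formula) : Prop :=
  ∃ j, j % 2 = 1 ∧ d.stmtAt j = some (.form a)

def PCanDefend (d : Dialogue) (c : Formula) : Prop :=
  ∃ r mv χ, r % 2 = 1 ∧ d.moveAt r = some mv ∧ mv.isAttack = true ∧
    d.stmtAt mv.ref = some (.form χ) ∧ Defends χ mv.statement (.form c)

end Dialogue

section Legality

open Dialogue

variable {d : Dialogue} {m mv : Move} {k n : ℕ}

lemma particleOK_iff : ParticleOK d ↔ ∀ k mv, d.moveAt k = some mv → MoveOK d k mv := by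
  refine ⟨fun h k mv hk => ?_, fun h i mv hi => h (i + 1) mv (by simpa [moveAt] using hi)⟩
  obtain ⟨i, rfl⟩ : ∃ i, k = i + 1 := ⟨k - 1, by have := (pos_lt_nextPos_of_moveAt hk).1; omega⟩
  exact h i mv (by simpa [moveAt] using hk)

lemma ParticleOK.moveOK (h : ParticleOK d) (hk : d.moveAt k = some mv) : MoveOK d k mv :=
  particleOK_iff.mp h k mv hk

lemma MoveOK.extend (h : MoveOK d n mv) : MoveOK (d.extend m) n mv := by
  obtain ⟨hlt, hpar, hatk, hdef⟩ := h
  refine ⟨hlt, hpar, fun ha => ?_, fun ha => ?_⟩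
  · obtain ⟨ψ, hψ, hs⟩ := hatk ha
    exact ⟨ψ, stmtAt_extend_of_eq_some hψ, hs⟩
  · obtain ⟨a, χ, hma, haa, hχ, hs⟩ := hdef ha
    exact ⟨a, χ, moveAt_extend_of_eq_some hma, haa, stmtAt_extend_of_eq_some hχ, hs⟩

lemma ParticleOK.extend (hp : ParticleOK d) (hm : MoveOK d (nextPos d) m) :
    ParticleOK (d.extend m) := by
  refine particleOK_iff.mpr fun k mv hk => ?_
  rw [moveAt_extend] at hk
  split_ifs at hk with h
  · cases hk
    exact h ▸ hm.extend
  · exact (hp.moveOK hk).extend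

/-- Under (E) every O-move answers the preceding P-move, so no P-assertion can be attacked
twice. -/
lemma d13_of_eRule (hp : ParticleOK d) (hE : ERule d) : D13 d := by
  rintro n₁ n₂ r hr ⟨m₁, h₁, -, rfl⟩ ⟨m₂, h₂, -, hr₂⟩
  have o₁ := (hp.moveOK h₁).2.1
  have o₂ := (hp.moveOK h₂).2.1
  have e₁ := hE n₁ m₁ (by omega) h₁
  have e₂ := hE n₂ m₂ (by omega) h₂
  omega

lemma legal_CL_iff : Legal rulesetCL d ↔ ParticleOK d ∧ D10 d ∧ ERule d :=
  ⟨fun ⟨hp, h10, _, hE⟩ => ⟨hp, h10, hE⟩,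
    fun ⟨hp, h10, hE⟩ => ⟨hp, h10, d13_of_eRule hp hE, hE⟩⟩

lemma D10.extend (h : D10 d)
    (hm : PTurn d → ∀ p, m.statement = .form (.atom p) → d.OAsserts (.atom p)) :
    D10 (d.extend m) := by
  intro n p hn hst
  rw [stmtAt_extend] at hst
  split_ifs at hst with hk
  · obtain ⟨j, hj, hjs⟩ := hm (by rw [PTurn, ← hk]; exact hn) p (Option.some_injective _ hst)
    exact ⟨j, hk ▸ lt_nextPos_of_stmtAt hjs, hj, stmtAt_extend_of_eq_some hjs⟩
  · obtain ⟨j, hjn, hj, hjs⟩ := h n p hn hst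
    exact ⟨j, hjn, hj, stmtAt_extend_of_eq_some hjs⟩

lemma ERule.extend (h : ERule d) (hm : ¬ PTurn d → m.ref = d.moves.length) :
    ERule (d.extend m) := by
  intro n mv hn hmv
  rw [moveAt_extend] at hmv
  split_ifs at hmv with hk
  · cases hmv
    have := hm (by simp only [PTurn]; omega)
    simp only [nextPos] at hk
    omega
  · exact h n mv hn hmv

lemma legalExt_of_pMove (hd : Legal rulesetCL d) (ht : PTurn d) (hm : MoveOK d (nextPos d) m)
    (hD10 : ∀ p, m.statement = .form (.atom p) → d.OAsserts (.atom p)) :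
    LegalExt rulesetCL d m := by
  obtain ⟨hp, h10, hE⟩ := legal_CL_iff.mp hd
  exact legal_CL_iff.mpr ⟨hp.extend hm, h10.extend fun _ => hD10, hE.extend (absurd ht)⟩

lemma legalExt_of_oMove (hd : Legal rulesetCL d) (ht : ¬ PTurn d)
    (hm : MoveOK d (nextPos d) m) (href : m.ref = d.moves.length) :
    LegalExt rulesetCL d m := by
  obtain ⟨hp, h10, hE⟩ := legal_CL_iff.mp hd
  exact legal_CL_iff.mpr ⟨hp.extend hm, h10.extend (absurd · ht), hE.extend fun _ => href⟩

lemma Dialogue.oMove_cases (ht : ¬ PTurn d) (hm : LegalExt rulesetCL d m) :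
    m.ref = d.moves.length ∧
    (m.isAttack = true →
      ∃ a, d.stmtAt d.moves.length = some (.form a) ∧ Attacks m.statement a) ∧
    (m.isAttack = false →
      ∃ mv χ, d.moveAt d.moves.length = some mv ∧ mv.isAttack = true ∧
        d.stmtAt mv.ref = some (.form χ) ∧ Defends χ mv.statement m.statement) := by
  obtain ⟨hp, -, hE⟩ := legal_CL_iff.mp hm
  have hnext : nextPos d % 2 = 1 := by simpa [PTurn] using ht
  have href : m.ref = d.moves.length := by
    simpa [nextPos] using hE _ m hnext moveAt_extend_nextPos
  have hne : d.moves.length ≠ nextPos d := by simp [nextPos]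
  obtain ⟨-, -, hatk, hdef⟩ := hp.moveOK moveAt_extend_nextPos
  refine ⟨href, fun ha => ?_, fun ha => ?_⟩
  · obtain ⟨a, hst, hs⟩ := hatk ha
    rw [href, stmtAt_extend_of_ne hne] at hst
    exact ⟨a, hst, hs⟩
  · obtain ⟨mv, χ, hmv, hmva, hχ, hs⟩ := hdef ha
    rw [href] at hmv
    have hlt := (hp.moveOK hmv).1
    rw [moveAt_extend_of_ne hne] at hmv
    rw [stmtAt_extend_of_ne (by simp only [nextPos]; omega)] at hχ
    exact ⟨mv, χ, hmv, hmva, hχ, hs⟩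

end Legality

section Knowledge

open Dialogue

variable {d : Dialogue} {m : Move} {a c : Formula}

lemma Dialogue.oAsserts_extend_iff :
    (d.extend m).OAsserts a ↔ d.OAsserts a ∨ (¬ PTurn d ∧ m.statement = .form a) := by
  constructor
  · rintro ⟨j, hj, hst⟩
    rw [stmtAt_extend] at hst
    split_ifs at hst with hk
    · exact .inr ⟨by simp only [PTurn]; omega, Option.some_injective _ hst⟩
    · exact .inl ⟨j, hj, hst⟩
  · rintro (⟨j, hj, hst⟩ | ⟨ht, hs⟩)
    · exact ⟨j, hj, stmtAt_extend_of_eq_some hst⟩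
    · exact ⟨nextPos d, by simpa [PTurn] using ht, by simp [hs]⟩

lemma Dialogue.pCanDefend_extend_iff (hp : ParticleOK (d.extend m)) :
    (d.extend m).PCanDefend c ↔ d.PCanDefend c ∨ (¬ PTurn d ∧ m.isAttack = true ∧
      ∃ χ, d.stmtAt m.ref = some (.form χ) ∧ Defends χ m.statement (.form c)) := by
  constructor
  · rintro ⟨r, mv, χ, hr, hmv, hatk, hχ, hs⟩
    have hlt := (hp.moveOK hmv).1
    rw [moveAt_extend] at hmv
    split_ifs at hmv with hk
    · cases hmv
      rw [stmtAt_extend_of_ne (by omega)] at hχ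
      exact .inr ⟨by simp only [PTurn]; omega, hatk, χ, hχ, hs⟩
    · have := (pos_lt_nextPos_of_moveAt hmv).2
      rw [stmtAt_extend_of_ne (by omega)] at hχ
      exact .inl ⟨r, mv, χ, hr, hmv, hatk, hχ, hs⟩
  · rintro (⟨r, mv, χ, hr, hmv, hatk, hχ, hs⟩ | ⟨ht, hatk, χ, hχ, hs⟩)
    · exact ⟨r, mv, χ, hr, moveAt_extend_of_eq_some hmv, hatk, stmtAt_extend_of_eq_some hχ, hs⟩
    · exact ⟨nextPos d, m, χ, by simpa [PTurn] using ht, by simp, hatk,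
        stmtAt_extend_of_eq_some hχ, hs⟩

end Knowledge

structure IsPPosition (Γ Δ : List Formula) (d : Dialogue) : Prop where
  legal : Legal rulesetCL d
  pTurn : PTurn d
  oAsserts : ∀ a ∈ Γ, d.OAsserts a
  pCanDefend : ∀ c ∈ Δ, d.PCanDefend c

namespace IsPPosition

open Dialogue

variable {Γ Δ Γ' Δ' : List Formula} {d : Dialogue} {m : Move} {a c : Formula}

lemma mono (h : IsPPosition Γ Δ d) (hΓ : Γ' ⊆ Γ) (hΔ : Δ' ⊆ Δ) : IsPPosition Γ' Δ' d :=
  ⟨h.legal, h.pTurn, fun a ha => h.oAsserts a (hΓ ha), fun c hc => h.pCanDefend c (hΔ hc)⟩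

lemma of_oAttack (hΓ : ∀ a ∈ Γ, d.OAsserts a) (hΔ : ∀ c ∈ Δ, d.PCanDefend c) (ht : ¬ PTurn d)
    (hm : LegalExt rulesetCL d m) (hatk : m.isAttack = true)
    (ha : d.stmtAt m.ref = some (.form a)) (hs : Attacks m.statement a) :
    IsPPosition (m.statement.assertions ++ Γ) (defenses a m.statement ++ Δ) (d.extend m) := by
  refine ⟨hm, by simpa using ht, fun b hb => ?_, fun c hc => ?_⟩
  · rcases List.mem_append.mp hb with hb | hb
    · exact oAsserts_extend_iff.mpr (.inr ⟨ht, Statement.mem_assertions.mp hb⟩)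
    · exact oAsserts_extend_iff.mpr (.inl (hΓ b hb))
  · rcases List.mem_append.mp hc with hc | hc
    · exact (pCanDefend_extend_iff hm.1).mpr
        (.inr ⟨ht, hatk, a, ha, hs.defends_of_mem_defenses hc⟩)
    · exact (pCanDefend_extend_iff hm.1).mpr (.inl (hΔ c hc))

lemma of_oDefense (hΓ : ∀ a ∈ Γ, d.OAsserts a) (hΔ : ∀ c ∈ Δ, d.PCanDefend c) (ht : ¬ PTurn d)
    (hm : LegalExt rulesetCL d m) (hc : m.statement = .form c) :
    IsPPosition (c :: Γ) Δ (d.extend m) := by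
  refine ⟨hm, by simpa using ht, fun b hb => ?_, fun b hb => ?_⟩
  · rcases List.mem_cons.mp hb with rfl | hb
    · exact oAsserts_extend_iff.mpr (.inr ⟨ht, hc⟩)
    · exact oAsserts_extend_iff.mpr (.inl (hΓ b hb))
  · exact (pCanDefend_extend_iff hm.1).mpr (.inl (hΔ b hb))

end IsPPosition

section PStrategy

open Dialogue

variable {Γ Δ : List Formula} {d : Dialogue} {mv : Move} {s : Statement} {x χ : Formula}

lemma pWinning_of_pMove (hpos : IsPPosition Γ Δ d) (hm : LegalExt rulesetCL d mv)
    (hatk : ∀ a s, mv.statement = .form a → Attacks s a →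
      ∀ d', IsPPosition (s.assertions ++ Γ) (defenses a s ++ Δ) d' → PWinning rulesetCL d')
    (hdef : ∀ χ c, mv.isAttack = true → d.stmtAt mv.ref = some (.form χ) →
      Defends χ mv.statement (.form c) → ∀ d', IsPPosition (c :: Γ) Δ d' → PWinning rulesetCL d') :
    PWinning rulesetCL d := by
  have ht : ¬ PTurn (d.extend mv) := by simpa using hpos.pTurn
  have hΓ : ∀ a ∈ Γ, (d.extend mv).OAsserts a :=
    fun a ha => oAsserts_extend_iff.mpr (.inl (hpos.oAsserts a ha))
  have hΔ : ∀ c ∈ Δ, (d.extend mv).PCanDefend c :=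
    fun c hc => (pCanDefend_extend_iff hm.1).mpr (.inl (hpos.pCanDefend c hc))
  refine .pMove d mv hpos.pTurn hm trivial (.oMoves _ ht fun m hm' => ?_)
  obtain ⟨href, hA, hD⟩ := oMove_cases ht hm'
  rw [length_moves_extend] at href hA hD
  cases h : m.isAttack
  · obtain ⟨mv', χ, hmv', hatk', hχ, hs⟩ := hD h
    rw [moveAt_extend_nextPos, Option.some_inj] at hmv'
    subst hmv'
    rw [stmtAt_extend_of_ne (hm.1.moveOK moveAt_extend_nextPos).1.ne] at hχ
    obtain ⟨c, hc⟩ := hs.exists_eq_form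
    exact hdef χ c hatk' hχ (hc ▸ hs) _ (.of_oDefense hΓ hΔ ht hm' hc)
  · obtain ⟨a, ha, hs⟩ := hA h
    rw [stmtAt_extend_nextPos, Option.some_inj] at ha
    refine hatk a _ ha hs _ (.of_oAttack hΓ hΔ ht hm' h ?_ hs)
    rw [href, stmtAt_extend_nextPos, ha]

lemma pWinning_of_defend (hpos : IsPPosition Γ Δ d) (hx : d.PCanDefend x)
    (hD10 : ∀ p, x = .atom p → d.OAsserts x)
    (hwin : ∀ s, Attacks s x →
      ∀ d', IsPPosition (s.assertions ++ Γ) (defenses x s ++ Δ) d' → PWinning rulesetCL d') :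
    PWinning rulesetCL d := by
  obtain ⟨r, mv, χ, hr, hmv, hatk, hχ, hs⟩ := hx
  have hpar : nextPos d % 2 = 0 := hpos.pTurn
  have hlt := (pos_lt_nextPos_of_moveAt hmv).2
  have hOK : MoveOK d (nextPos d) ⟨.form x, false, r⟩ :=
    ⟨hlt, by simp only; omega, by simp, fun _ => ⟨mv, χ, hmv, hatk, hχ, hs⟩⟩
  refine pWinning_of_pMove hpos (legalExt_of_pMove hpos.legal hpos.pTurn hOK ?_) ?_ (by simp)
  · rintro p ⟨⟩
    exact hD10 p rfl
  · rintro a s ⟨⟩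
    exact hwin s

lemma pWinning_of_attack (hpos : IsPPosition Γ Δ d) (hχ : d.OAsserts χ) (hs : Attacks s χ)
    (hD10 : ∀ p, s = .form (.atom p) → d.OAsserts (.atom p))
    (hdef : ∀ c, Defends χ s (.form c) →
      ∀ d', IsPPosition (c :: Γ) Δ d' → PWinning rulesetCL d')
    (hatk : ∀ a s', s = .form a → Attacks s' a →
      ∀ d', IsPPosition (s'.assertions ++ Γ) (defenses a s' ++ Δ) d' → PWinning rulesetCL d') :
    PWinning rulesetCL d := by
  obtain ⟨j, hj, hjs⟩ := hχ
  have hpar : nextPos d % 2 = 0 := hpos.pTurn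
  have hOK : MoveOK d (nextPos d) ⟨s, true, j⟩ :=
    ⟨lt_nextPos_of_stmtAt hjs, by simp only; omega, fun _ => ⟨χ, hjs, hs⟩, by simp⟩
  refine pWinning_of_pMove hpos (legalExt_of_pMove hpos.legal hpos.pTurn hOK hD10) hatk ?_
  intro χ' c _ hχ' hc
  rw [hjs, Option.some_inj, Statement.form.injEq] at hχ'
  exact hdef c (hχ' ▸ hc)

end PStrategy

def WinsBelow (n : ℕ) : Prop :=
  ∀ Γ Δ d, weightSum Γ + weightSum Δ < n → SeqValid Γ Δ → IsPPosition Γ Δ d →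
    PWinning rulesetCL d

namespace WinsBelow

variable {Γ Δ G D : List Formula} {d : Dialogue} {x a : Formula}

lemma replace_left (ih : WinsBelow (weightSum Γ + weightSum Δ)) (hv : SeqValid Γ Δ) (hx : x ∈ Γ)
    (hw : weightSum G + weightSum D < x.weight) (hsem : ∀ v, Falsifies v G D → x.eval v = true)
    (hpos : IsPPosition (G ++ Γ) (D ++ Δ) d) : PWinning rulesetCL d := by
  refine ih _ _ d ?_ (hv.replace_left hsem)
    (hpos.mono (List.erase_sublist.append_left G).subset (List.Subset.refl _))
  have := weightSum_erase hx
  simp only [weightSum_append]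
  omega

lemma replace_right (ih : WinsBelow (weightSum Γ + weightSum Δ)) (hv : SeqValid Γ Δ) (hx : x ∈ Δ)
    (hw : weightSum G + weightSum D < x.weight) (hsem : ∀ v, Falsifies v G D → x.eval v = false)
    (hpos : IsPPosition (G ++ Γ) (D ++ Δ) d) : PWinning rulesetCL d := by
  refine ih _ _ d ?_ (hv.replace_right hsem)
    (hpos.mono (List.Subset.refl _) (List.erase_sublist.append_left D).subset)
  have := weightSum_erase hx
  simp only [weightSum_append]
  omega

lemma defend (ih : WinsBelow (weightSum Γ + weightSum Δ)) (hv : SeqValid Γ Δ)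
    (hpos : IsPPosition Γ Δ d) (hx : x ∈ Δ) (hxa : Assertable Γ x) : PWinning rulesetCL d :=
  pWinning_of_defend hpos (hpos.pCanDefend x hx) (fun p hp => hpos.oAsserts x (hxa p hp))
    fun _ hs _ => ih.replace_right hv hx hs.weightSum_lt fun _ => hs.eval_eq_false

/-- P has attacked `x` by asserting `a`; this handles O's counterattacks on `a`. -/
lemma counterattacked (ih : WinsBelow (weightSum Γ + weightSum Δ)) (hv : SeqValid Γ Δ)
    (hx : x ∈ Γ) (hax : a.weight < x.weight) (hsem : ∀ v, a.eval v = false → x.eval v = true) :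
    ∀ a' s, Statement.form a = .form a' → Attacks s a' →
      ∀ d', IsPPosition (s.assertions ++ Γ) (defenses a' s ++ Δ) d' → PWinning rulesetCL d' := by
  rintro a' s ⟨⟩ hs d' hpos
  exact ih.replace_left hv hx (hs.weightSum_lt.trans hax) (fun v h => hsem v (hs.eval_eq_false h))
    hpos

lemma attack (ih : WinsBelow (weightSum Γ + weightSum Δ)) (hv : SeqValid Γ Δ)
    (hpos : IsPPosition Γ Δ d) (hx : x ∈ Γ) (hxa : Attackable Γ x) : PWinning rulesetCL d := by
  have hxO := hpos.oAsserts x hx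
  cases x with
  | atom => exact hxa.elim
  | and b c =>
    -- the conjunction leaves `Γ` only once O has defended both conjuncts
    refine pWinning_of_attack hpos hxO (.andL b c) (by simp) (fun b' hb d' hpos' => ?_) (by simp)
    cases hb
    refine pWinning_of_attack hpos' (hpos'.oAsserts _ (.tail _ hx)) (.andR b c) (by simp)
      (fun c' hc d'' hpos'' => ?_) (by simp)
    cases hc
    exact ih.replace_left (G := [c, b]) (D := []) hv hx (by simp [Formula.weight]; omega)
      (fun v h => by simp_all [Falsifies, Formula.eval]) hpos''
  | or b c =>
    refine pWinning_of_attack hpos hxO (.qmark b c) (by simp) (fun c' hc d' hpos' => ?_) (by simp)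
    cases hc
    · exact ih.replace_left (G := [b]) (D := []) hv hx (by simp [Formula.weight])
        (fun v h => by simp_all [Falsifies, Formula.eval]) hpos'
    · exact ih.replace_left (G := [c]) (D := []) hv hx (by simp [Formula.weight])
        (fun v h => by simp_all [Falsifies, Formula.eval]) hpos'
  | imp a c =>
    refine pWinning_of_attack hpos hxO (.imp a c)
      (by rintro p ⟨⟩; exact hpos.oAsserts _ (hxa p rfl)) (fun c' hc d' hpos' => ?_)
      (ih.counterattacked hv hx (by simp [Formula.weight]) (by simp_all [Formula.eval]))
    cases hc
    exact ih.replace_left (G := [c]) (D := []) hv hx (by simp [Formula.weight])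
      (fun v h => by simp_all [Falsifies, Formula.eval]) hpos'
  | neg a =>
    exact pWinning_of_attack hpos hxO (.neg a) (by rintro p ⟨⟩; exact hpos.oAsserts _ (hxa p rfl))
      (fun _ hc => by cases hc)
      (ih.counterattacked hv hx (by simp [Formula.weight]) (by simp_all [Formula.eval]))

end WinsBelow

lemma winsBelow (n : ℕ) : WinsBelow n := by
  induction n using Nat.strong_induction_on with
  | _ n ih =>
  intro Γ Δ d hlt hv hpos
  have ih' : WinsBelow (weightSum Γ + weightSum Δ) := ih _ hlt
  by_cases hdef : ∃ x ∈ Δ, Assertable Γ x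
  · obtain ⟨x, hx, hxa⟩ := hdef
    exact ih'.defend hv hpos hx hxa
  by_cases hatk : ∃ x ∈ Γ, Attackable Γ x
  · obtain ⟨x, hx, hxa⟩ := hatk
    exact ih'.attack hv hpos hx hxa
  push Not at hdef hatk
  exact absurd (falsifies_of_stuck hatk hdef) (hv _)

lemma pWinning_of_seqValid {Γ Δ : List Formula} {d : Dialogue} (hv : SeqValid Γ Δ)
    (hpos : IsPPosition Γ Δ d) : PWinning rulesetCL d :=
  winsBelow _ Γ Δ d (Nat.lt_succ_self _) hv hpos

structure Dialogue.FalsifiedBy (d : Dialogue) (v : ℕ → Bool) : Prop where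
  initial : d.initial.eval v = false
  oAsserts : ∀ a, d.OAsserts a → a.eval v = true
  pCanDefend : ∀ c, d.PCanDefend c → c.eval v = false

namespace Dialogue.FalsifiedBy

open Dialogue

variable {d : Dialogue} {v : ℕ → Bool} {m mv : Move} {a c χ : Formula}

lemma extend (h : d.FalsifiedBy v) (hp : ParticleOK (d.extend m))
    (hO : ¬ PTurn d → (∀ a, m.statement = .form a → a.eval v = true) ∧
      (m.isAttack = true → ∀ χ c, d.stmtAt m.ref = some (.form χ) →
        Defends χ m.statement (.form c) → c.eval v = false)) :
    (d.extend m).FalsifiedBy v := by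
  refine ⟨h.initial, fun a ha => ?_, fun c hc => ?_⟩
  · rcases oAsserts_extend_iff.mp ha with ha | ⟨ht, hs⟩
    exacts [h.oAsserts a ha, (hO ht).1 a hs]
  · rcases (pCanDefend_extend_iff hp).mp hc with hc | ⟨ht, hatk, χ, hχ, hs⟩
    exacts [h.pCanDefend c hc, (hO ht).2 hatk χ c hχ hs]

lemma exists_oAttack (hd : Legal rulesetCL d) (ht : ¬ PTurn d) (h : d.FalsifiedBy v)
    (ha : d.stmtAt d.moves.length = some (.form a)) (hfa : a.eval v = false) :
    ∃ m, LegalExt rulesetCL d m ∧ (d.extend m).FalsifiedBy v := by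
  have hpar : d.moves.length % 2 = 0 := by simpa [pTurn_iff] using ht
  have hna : ∀ p, a ≠ .atom p := by
    rintro p rfl
    obtain ⟨j, -, hj, hjs⟩ := hd.2.1 _ p hpar ha
    exact Bool.false_ne_true (hfa ▸ h.oAsserts _ ⟨j, hj, hjs⟩)
  obtain ⟨s, hs, hsT, hsF⟩ := a.exists_attacks_of_eval_eq_false hfa hna
  have hOK : MoveOK d (nextPos d) ⟨s, true, d.moves.length⟩ :=
    ⟨by simp [nextPos], by simp [nextPos]; omega, fun _ => ⟨a, ha, hs⟩, by simp⟩
  have hm := legalExt_of_oMove hd ht hOK rfl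
  refine ⟨_, hm, h.extend hm.1 fun _ => ⟨hsT, fun _ χ c hχ hc => ?_⟩⟩
  rw [ha, Option.some_inj, Statement.form.injEq] at hχ
  exact hsF c (hχ ▸ hc)

lemma exists_oDefense (hd : Legal rulesetCL d) (ht : ¬ PTurn d) (h : d.FalsifiedBy v)
    (hmv : d.moveAt d.moves.length = some mv) (hatk : mv.isAttack = true)
    (hχ : d.stmtAt mv.ref = some (.form χ)) (hs : Defends χ mv.statement (.form c))
    (hc : c.eval v = true) :
    ∃ m, LegalExt rulesetCL d m ∧ (d.extend m).FalsifiedBy v := by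
  have hpar : d.moves.length % 2 = 0 := by simpa [pTurn_iff] using ht
  have hOK : MoveOK d (nextPos d) ⟨.form c, false, d.moves.length⟩ :=
    ⟨by simp [nextPos], by simp [nextPos]; omega, by simp, fun _ => ⟨mv, χ, hmv, hatk, hχ, hs⟩⟩
  have hm := legalExt_of_oMove hd ht hOK rfl
  exact ⟨_, hm, h.extend hm.1 fun _ => ⟨by rintro a ⟨⟩; exact hc, by simp⟩⟩

lemma exists_oMove (hd : Legal rulesetCL d) (ht : ¬ PTurn d) (h : d.FalsifiedBy v) :
    ∃ m, LegalExt rulesetCL d m ∧ (d.extend m).FalsifiedBy v := by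
  rcases Nat.eq_zero_or_pos d.moves.length with h0 | hpos
  · exact h.exists_oAttack hd ht (by simp [h0, stmtAt]) h.initial
  obtain ⟨mv, hmv⟩ := exists_moveAt (d := d) hpos (by simp [nextPos])
  have hst := stmtAt_of_moveAt hmv
  obtain ⟨-, hpar, hatk, hdef⟩ := hd.1.moveOK hmv
  have hodd : mv.ref % 2 = 1 := by simp [pTurn_iff] at ht; omega
  cases hA : mv.isAttack
  · obtain ⟨att, χ, hatt, hattA, hχ, hs⟩ := hdef hA
    obtain ⟨a, ha⟩ := hs.exists_eq_form
    rw [ha] at hs hst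
    exact h.exists_oAttack hd ht hst (h.pCanDefend a ⟨_, att, χ, hodd, hatt, hattA, hχ, hs⟩)
  · obtain ⟨χ, hχ, hs⟩ := hatk hA
    rcases hs.exists_defends_or (h.oAsserts χ ⟨_, hodd, hχ⟩) with ⟨c, hc, hcv⟩ | ⟨b, hb, hbv⟩
    · exact h.exists_oDefense hd ht hmv hA hχ hc hcv
    · exact h.exists_oAttack hd ht (hb ▸ hst) hbv

end Dialogue.FalsifiedBy

lemma not_pWinningC {C : Dialogue → Move → Prop} {d : Dialogue} {v : ℕ → Bool}
    (hw : PWinningC rulesetCL C d) (hd : Legal rulesetCL d) (h : d.FalsifiedBy v) : False := by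
  induction hw with
  | pMove d m ht hm _ _ ih => exact ih hm (h.extend hm.1 (absurd ht))
  | oMoves d ht _ ih =>
    obtain ⟨m, hm, h'⟩ := h.exists_oMove hd ht
    exact ih m hm hm h'

lemma legal_initial {φ : Formula} (hφ : ∀ p, φ ≠ .atom p) : Legal rulesetCL ⟨φ, []⟩ := by
  refine legal_CL_iff.mpr ⟨by simp [ParticleOK], fun n p _ hst => ?_, fun n m _ hm => ?_⟩
  · rcases Nat.eq_zero_or_pos n with rfl | hn
    · exact absurd (by simpa [Dialogue.stmtAt] using hst) (hφ p)
    · simp [Dialogue.stmtAt, hn.ne'] at hst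
  · simp [Dialogue.moveAt] at hm

theorem tautology_of_valid {φ : Formula} (h : valid rulesetCL φ) : Tautology φ := by
  intro v
  by_contra hv
  refine not_pWinningC h.2 h.1 (v := v) ⟨by simpa using hv, ?_, ?_⟩
  · rintro a ⟨j, hj, hjs⟩
    simp [Dialogue.stmtAt, show j ≠ 0 by omega] at hjs
  · rintro c ⟨r, mv, -, -, hmv, -⟩
    simp [Dialogue.moveAt] at hmv

theorem valid_of_tautology {φ : Formula} (h : Tautology φ) : valid rulesetCL φ := by
  have hφ : ∀ p, φ ≠ .atom p := by
    rintro p rfl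
    simpa [Formula.eval] using h fun _ => false
  have ht : ¬ PTurn (⟨φ, []⟩ : Dialogue) := by simp [PTurn, nextPos]
  refine ⟨legal_initial hφ, .oMoves _ ht fun m hm => ?_⟩
  obtain ⟨href, hA, hD⟩ := Dialogue.oMove_cases ht hm
  cases hatk : m.isAttack
  · obtain ⟨mv, -, hmv, -⟩ := hD hatk
    simp [Dialogue.moveAt] at hmv
  · obtain ⟨a, ha, hs⟩ := hA hatk
    obtain rfl : φ = a := by simpa [Dialogue.stmtAt] using ha
    have hv : SeqValid [] [φ] := fun v hf => by simp [Falsifies, h v] at hf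
    have hv' := hv.replace_right (G := m.statement.assertions) fun _ => hs.eval_eq_false
    have hpos := IsPPosition.of_oAttack (Γ := []) (Δ := []) (by simp) (by simp) ht hm hatk
      (href ▸ ha) hs
    simp only [List.append_nil, List.erase_cons_head] at hv' hpos
    exact pWinning_of_seqValid hv' hpos

theorem valid_CL_iff_tautology {φ : Formula} : valid rulesetCL φ ↔ Tautology φ :=
  ⟨tautology_of_valid, valid_of_tautology⟩

/-- (Composition for CL) The set of CL-valid formulas is closed under modus
ponens. -/
theorem CL_modus_ponens (φ ψ : Formula)
    (h₁ : valid rulesetCL φ) (h₂ : valid rulesetCL (.imp φ ψ)) :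
    valid rulesetCL ψ := by
  refine valid_CL_iff_tautology.mpr fun v => ?_
  simpa [Formula.eval, valid_CL_iff_tautology.mp h₁ v] using valid_CL_iff_tautology.mp h₂ v

end LorenzenDialogues
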